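/- Fix β* ∈ (√3/2, 1) as the unique root in that interval of the cubic 8β³ − 14β² − 6β + 11 = 0 (numerically β* ≈ 0.9079), and set r* = 1/(3 − 2β*). Define ν(β, r) = min{ r(1−β), −3/2 + 3β/2 + β²/(2(1+β)), 1/2 − r/2 } for β ∈ (√3/2, 1) and r ∈ (0,1). Then (β*, r*) maximizes ν over (√3/2,1)×(0,1), the maximal value ν(β*, r*) exceeds 0.077, and ν(β*, r*)/(2 − β*) > 1/15. -/

import Mathlib

/-!
The probability exponent `q β = probExp β = (4β² - 3)/(2(1+β))` is increasing for `β ≥ 0`.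
For `a = 1 - β ≥ 0` the other two terms satisfy `min (r a) ((1 - r)/2) ≤ a/(1 + 2a)`, with equality
at the crossing point `r = 1/(3 - 2β)`, and `(1 - β)/(3 - 2β)` is decreasing in `β`. So `ν ≤ q β` and
`ν ≤ (1 - β)/(3 - 2β)`, an increasing and a decreasing bound, and the cubic says exactly that the two
bounds meet at `β*`; there all three terms of `ν(β*, r*)` equal `(1 - β*)/(3 - 2β*)`.
-/

/-- The exponent function `ν(β,r) = min{r(1−β), −3/2 + 3β/2 + β²/(2(1+β)), 1/2 − r/2}`. -/
noncomputable def nuExp (β r : ℝ) : ℝ :=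
  min (r * (1 - β)) (min (-(3 / 2) + 3 * β / 2 + β ^ 2 / (2 * (1 + β))) (1 / 2 - r / 2))

open Set

noncomputable def probExp (β : ℝ) : ℝ :=
  -(3 / 2) + 3 * β / 2 + β ^ 2 / (2 * (1 + β))

theorem nuExp_eq_min_probExp (β r : ℝ) :
    nuExp β r = min (r * (1 - β)) (min (probExp β) (1 / 2 - r / 2)) :=
  rfl

theorem probExp_eq {β : ℝ} (hβ : 1 + β ≠ 0) : probExp β = (4 * β ^ 2 - 3) / (2 * (1 + β)) := by
  unfold probExp
  field_simp
  ring

theorem monotoneOn_probExp : MonotoneOn probExp (Ici 0) := by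
  intro x (hx : 0 ≤ x) y (hy : 0 ≤ y) hxy
  rw [probExp_eq (by positivity), probExp_eq (by positivity), div_le_div_iff₀ (by positivity)
    (by positivity)]
  nlinarith [mul_nonneg (sub_nonneg.2 hxy) (mul_nonneg hx hy), mul_nonneg hx (sub_nonneg.2 hxy)]

theorem antitoneOn_one_sub_div_three_sub_two_mul :
    AntitoneOn (fun β : ℝ => (1 - β) / (3 - 2 * β)) (Iio (3 / 2)) := by
  intro x (hx : x < 3 / 2) y (hy : y < 3 / 2) hxy
  dsimp only
  rw [div_le_div_iff₀ (by linarith) (by linarith)]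
  linarith

theorem min_mul_half_sub_half_le {a : ℝ} (ha : 0 ≤ a) (r : ℝ) :
    min (r * a) (1 / 2 - r / 2) ≤ a / (1 + 2 * a) := by
  have hpos : 0 < 1 + 2 * a := by linarith
  rcases le_total r (1 / (1 + 2 * a)) with hr | hr
  · calc min (r * a) (1 / 2 - r / 2) ≤ r * a := min_le_left _ _
      _ ≤ 1 / (1 + 2 * a) * a := mul_le_mul_of_nonneg_right hr ha
      _ = a / (1 + 2 * a) := by ring
  · calc min (r * a) (1 / 2 - r / 2) ≤ 1 / 2 - r / 2 := min_le_right _ _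
      _ ≤ 1 / 2 - 1 / (1 + 2 * a) / 2 := by linarith
      _ = a / (1 + 2 * a) := by field_simp; ring

theorem nuExp_le_probExp (β r : ℝ) : nuExp β r ≤ probExp β :=
  (min_le_right _ _).trans (min_le_left _ _)

theorem nuExp_le_one_sub_div {β : ℝ} (hβ : β ≤ 1) (r : ℝ) :
    nuExp β r ≤ (1 - β) / (3 - 2 * β) := by
  have hmin : nuExp β r ≤ min (r * (1 - β)) (1 / 2 - r / 2) :=
    min_le_min le_rfl (min_le_right _ _)
  have hbal := min_mul_half_sub_half_le (sub_nonneg.2 hβ) r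
  rw [show 1 + 2 * (1 - β) = 3 - 2 * β by ring] at hbal
  exact hmin.trans hbal

theorem probExp_eq_of_cubic_eq_zero {β : ℝ} (h1 : 1 + β ≠ 0) (h3 : 3 - 2 * β ≠ 0)
    (hroot : 8 * β ^ 3 - 14 * β ^ 2 - 6 * β + 11 = 0) :
    probExp β = (1 - β) / (3 - 2 * β) := by
  rw [probExp_eq h1, div_eq_div_iff (by simpa using h1) h3]
  linear_combination -hroot

theorem nuExp_one_div_of_cubic_eq_zero {β : ℝ} (h1 : 1 + β ≠ 0) (h3 : 3 - 2 * β ≠ 0)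
    (hroot : 8 * β ^ 3 - 14 * β ^ 2 - 6 * β + 11 = 0) :
    nuExp β (1 / (3 - 2 * β)) = (1 - β) / (3 - 2 * β) := by
  have hlin : 1 / (3 - 2 * β) * (1 - β) = (1 - β) / (3 - 2 * β) := by ring
  have hhalf : 1 / 2 - 1 / (3 - 2 * β) / 2 = (1 - β) / (3 - 2 * β) := by field_simp; ring
  rw [nuExp_eq_min_probExp, probExp_eq_of_cubic_eq_zero h1 h3 hroot, hlin, hhalf, min_self, min_self]

theorem nuExp_le_of_cubic_eq_zero {βs : ℝ} (hβs₀ : 0 ≤ βs) (hβs₁ : βs ≤ 1)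
    (hroot : 8 * βs ^ 3 - 14 * βs ^ 2 - 6 * βs + 11 = 0) {β : ℝ} (hβ₀ : 0 ≤ β) (hβ₁ : β ≤ 1)
    (r : ℝ) : nuExp β r ≤ (1 - βs) / (3 - 2 * βs) := by
  rcases le_total β βs with hle | hle
  · calc nuExp β r ≤ probExp β := nuExp_le_probExp β r
      _ ≤ probExp βs := monotoneOn_probExp hβ₀ hβs₀ hle
      _ = (1 - βs) / (3 - 2 * βs) := probExp_eq_of_cubic_eq_zero (by linarith) (by linarith) hroot
  · calc nuExp β r ≤ (1 - β) / (3 - 2 * β) := nuExp_le_one_sub_div hβ₁ r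
      _ ≤ (1 - βs) / (3 - 2 * βs) :=
        antitoneOn_one_sub_div_three_sub_two_mul (show βs < 3 / 2 by linarith)
          (show β < 3 / 2 by linarith) hle

theorem lt_of_cubic_eq_zero {β : ℝ} (h₀ : 1 / 2 < β) (h₁ : β < 1)
    (hroot : 8 * β ^ 3 - 14 * β ^ 2 - 6 * β + 11 = 0) : β < 0.908 := by
  nlinarith [sq_nonneg (β - 0.908), mul_pos (sub_pos.2 h₀) (sub_pos.2 h₁)]

/-- the root `β*` of `8β³ − 14β² − 6β + 11` in `(√3/2, 1)` together with
`r* = 1/(3 − 2β*)` maximizes `ν` over `(√3/2,1)×(0,1)`, with `ν(β*,r*) > 0.077` and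
`ν(β*,r*)/(2 − β*) > 1/15`. -/
theorem nuExp_maximized (βs rs : ℝ)
    (hβ : βs ∈ Set.Ioo (Real.sqrt 3 / 2) 1)
    (hroot : 8 * βs ^ 3 - 14 * βs ^ 2 - 6 * βs + 11 = 0)
    (hrs : rs = 1 / (3 - 2 * βs)) :
    (∀ β ∈ Set.Ioo (Real.sqrt 3 / 2) 1, ∀ r ∈ Set.Ioo (0 : ℝ) 1, nuExp β r ≤ nuExp βs rs) ∧
    0.077 < nuExp βs rs ∧ 1 / 15 < nuExp βs rs / (2 - βs) := by
  have hsqrt : 1 < Real.sqrt 3 := by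
    rw [Real.lt_sqrt zero_le_one]; norm_num
  obtain ⟨hβs₀, hβs₁⟩ := hβ
  have hval : nuExp βs rs = (1 - βs) / (3 - 2 * βs) := by
    rw [hrs]; exact nuExp_one_div_of_cubic_eq_zero (by linarith) (by linarith) hroot
  have hlt : βs < 0.908 := lt_of_cubic_eq_zero (by linarith) hβs₁ hroot
  refine ⟨fun β hβ r _ => ?_, ?_, ?_⟩
  · rw [hval]
    exact nuExp_le_of_cubic_eq_zero (by linarith) hβs₁.le hroot (by linarith [hβ.1]) hβ.2.le r
  · rw [hval, lt_div_iff₀ (by linarith)]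
    linarith
  · rw [hval, div_div, lt_div_iff₀ (by nlinarith)]
    nlinarith
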